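/- Let $B$ be a real $n\times n$ matrix that is of positive type in the following sense: (i) $B_{ii}>0$ for all $i$ and $B_{ij}\le 0$ for $i\ne j$; (ii) $\sum_j B_{ij}\ge 0$ for all $i$, with strict inequality for the indices in a nonempty set $D$ (the 'boundary' indices); (iii) in the directed graph with an edge from $i$ to $j$ whenever $B_{ij}\ne 0$ and $i\ne j$, every index $i\notin D$ has a path to some index in $D$. Then $B$ is monotone: $B$ is invertible and $B^{-1}$ has nonnegative entries. -/
import Mathlib


open Finset Matrix

/-- A matrix of positive type is monotone: invertible with entrywise nonnegative inverse. -/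
theorem stmt_7 {n : ℕ} (B : Matrix (Fin n) (Fin n) ℝ)
    (hdiag : ∀ i, 0 < B i i)
    (hoff : ∀ i j, i ≠ j → B i j ≤ 0)
    (hrow : ∀ i, 0 ≤ ∑ j, B i j)
    (D : Finset (Fin n)) (hD : D.Nonempty)
    (hrowD : ∀ i ∈ D, 0 < ∑ j, B i j)
    (hreach : ∀ i ∉ D, ∃ j ∈ D,
        Relation.ReflTransGen (fun a b : Fin n => a ≠ b ∧ B a b ≠ 0) i j) :
    IsUnit B.det ∧ ∀ i j, 0 ≤ B⁻¹ i j := by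
  -- Core maximum principle: B x ≥ 0 entrywise implies x ≥ 0 entrywise.
  have core : ∀ x : Fin n → ℝ, (∀ i, 0 ≤ (B *ᵥ x) i) → ∀ i, 0 ≤ x i := by
    intro x hx
    by_contra hneg
    push_neg at hneg
    obtain ⟨i, hi⟩ := hneg
    obtain ⟨i₀, -, hmin⟩ := Finset.exists_min_image Finset.univ x ⟨i, Finset.mem_univ i⟩
    set m := x i₀ with hm
    have hmlt : m < 0 := lt_of_le_of_lt (hmin i (Finset.mem_univ i)) hi
    have key : ∀ a, x a = m → a ∉ D ∧ ∀ b, B a b ≠ 0 → x b = m := by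
      intro a ha
      have h1 : ∀ j ∈ Finset.univ, B a j * (x j - m) ≤ 0 := by
        intro j _
        rcases eq_or_ne a j with rfl | hne
        · simp [ha]
        · exact mul_nonpos_of_nonpos_of_nonneg (hoff a j hne)
            (sub_nonneg.2 (hmin j (Finset.mem_univ j)))
      have h2 : m * ∑ j, B a j ≤ 0 :=
        mul_nonpos_of_nonpos_of_nonneg hmlt.le (hrow a)
      have hsum : (∑ j, B a j * (x j - m)) + m * ∑ j, B a j = (B *ᵥ x) a := by
        simp only [Matrix.mulVec, dotProduct, mul_sub,
          Finset.sum_sub_distrib, Finset.mul_sum]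
        ring_nf
        simp [mul_comm]
      have hS : ∑ j, B a j * (x j - m) ≤ 0 := Finset.sum_nonpos h1
      have hST : 0 ≤ (∑ j, B a j * (x j - m)) + m * ∑ j, B a j := hsum ▸ hx a
      have hT0 : m * ∑ j, B a j = 0 := le_antisymm h2 (by linarith)
      have hS0 : ∑ j, B a j * (x j - m) = 0 := by linarith
      have hterm : ∀ j ∈ Finset.univ, B a j * (x j - m) = 0 :=
        (Finset.sum_eq_zero_iff_of_nonpos h1).1 hS0
      have hrow0 : ∑ j, B a j = 0 := by
        rcases mul_eq_zero.1 hT0 with h | h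
        · exact absurd h hmlt.ne
        · exact h
      constructor
      · intro haD
        exact absurd hrow0 (hrowD a haD).ne'
      · intro b hb
        have := hterm b (Finset.mem_univ b)
        rcases mul_eq_zero.1 this with h | h
        · exact absurd h hb
        · linarith [sub_eq_zero.1 h]
    have hi₀D : i₀ ∉ D := (key i₀ rfl).1
    obtain ⟨d, hdD, hpath⟩ := hreach i₀ hi₀D
    have hxd : x d = m := by
      clear hdD
      induction hpath with
      | refl => rfl
      | tail _ hbc ih => exact (key _ ih).2 _ hbc.2
    exact (key d hxd).1 hdD
  -- Invertibility
  have hinj : ∀ v : Fin n → ℝ, B *ᵥ v = 0 → v = 0 := by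
    intro v hv
    have h1 : ∀ i, 0 ≤ v i := core v (by simp [hv])
    have h2 : ∀ i, 0 ≤ (-v) i := core (-v) (by simp [Matrix.mulVec_neg, hv])
    funext i
    have := h2 i
    simp at this
    exact le_antisymm this (h1 i)
  have hdet : B.det ≠ 0 := by
    intro h
    obtain ⟨v, hv0, hv⟩ := (Matrix.exists_mulVec_eq_zero_iff).2 h
    exact hv0 (hinj v hv)
  have hdetu : IsUnit B.det := isUnit_iff_ne_zero.2 hdet
  refine ⟨hdetu, fun i j => ?_⟩
  have hx : ∀ k, 0 ≤ (B *ᵥ fun l => B⁻¹ l j) k := by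
    intro k
    have heq : (B *ᵥ fun l => B⁻¹ l j) k = (B * B⁻¹) k j := by
      simp [Matrix.mulVec, Matrix.mul_apply, dotProduct]
    rw [heq, Matrix.mul_nonsing_inv B hdetu]
    by_cases h : k = j <;> simp [Matrix.one_apply, h]
  exact core _ hx i
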